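/- arXiv:1801.03482 — 4 statements merged into one kernel-verified Lean document; each statement's English description precedes it below -/
import Mathlib

section
/- For every α ∈ (ℤ²)⁺, every ℓ ∈ ℤ, and all Jordan types α̲, β̲ ∈ J_α, if β̲ ⪯ α̲ then ℓ(β̲) ≤ ℓ(α̲), i.e. the length of β̲ is at most the length of α̲. -/
/-- The positive cone `(ℤ²)⁺ = {(r,d) : r > 0, or r = 0 and d ≥ 0}`. -/
def PosClass (p : ℤ × ℤ) : Prop := 0 < p.1 ∨ (p.1 = 0 ∧ 0 ≤ p.2)

/-- The twist `β(n) := (r, d + n·r)` for `β = (r,d)`. -/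
def twist (β : ℤ × ℤ) (n : ℤ) : ℤ × ℤ := (β.1, β.2 + n * β.1)

/-- The standard order on `ℤ × ℤ`: `β ≤ α` iff `α - β ∈ (ℤ²)⁺`. -/
def StdLE (β α : ℤ × ℤ) : Prop := PosClass (α - β)

/-- `a = (α_1, …, α_s)` (a nonempty list, `s ≥ 1`, zero-indexed in Lean) is a Jordan type of
class `α` (for the parameter `ℓ`): all entries lie in `(ℤ²)⁺`, the last entry is nonzero, and
`α = Σ_{i=1}^s Σ_{k=0}^{i-1} α_i(-kℓ)`. -/
def IsJordanType (ℓ : ℤ) (α : ℤ × ℤ) (a : List (ℤ × ℤ)) : Prop :=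
  a ≠ [] ∧ (∀ x ∈ a, PosClass x) ∧ a.getLast? ≠ some 0 ∧
    α = ∑ j ∈ Finset.range a.length, ∑ k ∈ Finset.range (j + 1),
          twist (a.getD j 0) (-(k : ℤ) * ℓ)

/-- The `k`-th kernel class `K_k(α̲) = Σ_{h=1}^k Σ_{j=h}^s α_j((h-j)ℓ)`
(written here with zero-based indices `h ∈ [0,k)`, `j ∈ [h, s)`). -/
def kernelClass (ℓ : ℤ) (a : List (ℤ × ℤ)) (k : ℕ) : ℤ × ℤ :=
  ∑ h ∈ Finset.range k, ∑ j ∈ Finset.Ico h a.length,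
    twist (a.getD j 0) (((h : ℤ) - (j : ℤ)) * ℓ)

/-- `b ⪯ a` iff `K_k(a) ≤ K_k(b)` (standard order) for every `k ≥ 1`. -/
def Preceq (ℓ : ℤ) (b a : List (ℤ × ℤ)) : Prop :=
  ∀ k : ℕ, 1 ≤ k → StdLE (kernelClass ℓ a k) (kernelClass ℓ b k)

/-!
The kernel classes `K_k` of a Jordan type with entries in `(ℤ²)⁺` increase with `k`, reach the
class `α` at `k = s` (the length), and the last step `K_s - K_{s-1}` is the nonzero last entry
`α_s`. So if `β̲ ⪯ α̲` with `ℓ(β̲) = s > n = ℓ(α̲)`, then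
`α = K_n(α̲) ≤ K_n(β̲) ≤ K_{s-1}(β̲) < K_s(β̲) = α`, which is absurd.
-/

lemma PosClass.zero : PosClass 0 := Or.inr ⟨rfl, le_rfl⟩

lemma PosClass.add {p q : ℤ × ℤ} (hp : PosClass p) (hq : PosClass q) : PosClass (p + q) := by
  unfold PosClass at *
  simp only [Prod.fst_add, Prod.snd_add]
  omega

lemma PosClass.sum {ι : Type*} {s : Finset ι} {f : ι → ℤ × ℤ} (hf : ∀ i ∈ s, PosClass (f i)) :
    PosClass (∑ i ∈ s, f i) :=
  Finset.sum_induction f PosClass (fun _ _ => PosClass.add) PosClass.zero hf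

-- A class of rank zero is fixed by every twist.
lemma PosClass.twist {β : ℤ × ℤ} (hβ : PosClass β) (n : ℤ) : PosClass (twist β n) := by
  rcases hβ with hr | ⟨hr, hd⟩
  · exact Or.inl hr
  · exact Or.inr ⟨hr, by simpa [_root_.twist, hr] using hd⟩

lemma PosClass.eq_zero_of_neg {p : ℤ × ℤ} (hp : PosClass p) (hn : PosClass (-p)) : p = 0 := by
  unfold PosClass at *
  simp only [Prod.fst_neg, Prod.snd_neg] at hn
  ext <;> simp only [Prod.fst_zero, Prod.snd_zero] <;> omega

lemma PosClass.getD {a : List (ℤ × ℤ)} (ha : ∀ x ∈ a, PosClass x) (j : ℕ) :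
    PosClass (a.getD j 0) := by
  rw [List.getD_eq_getElem?_getD]
  cases hj : a[j]? with
  | none => exact PosClass.zero
  | some x => exact ha x (List.mem_of_getElem? hj)

lemma StdLE.refl (p : ℤ × ℤ) : StdLE p p := by
  simpa [StdLE] using PosClass.zero

lemma StdLE.trans {p q r : ℤ × ℤ} (hpq : StdLE p q) (hqr : StdLE q r) : StdLE p r := by
  simpa [StdLE] using hqr.add hpq

lemma PosClass.eq_zero_of_stdLE_add {p q : ℤ × ℤ} (hq : PosClass q) (h : StdLE (p + q) p) :
    q = 0 :=
  hq.eq_zero_of_neg (by simpa [StdLE] using h)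

section kernelClass

variable (ℓ : ℤ) (a : List (ℤ × ℤ))

lemma kernelClass_succ (k : ℕ) :
    kernelClass ℓ a (k + 1) =
      kernelClass ℓ a k + ∑ j ∈ Finset.Ico k a.length, twist (a.getD j 0) (((k : ℤ) - j) * ℓ) :=
  Finset.sum_range_succ _ k

lemma kernelClass_length_of_eq_succ {m : ℕ} (hm : a.length = m + 1) :
    kernelClass ℓ a (m + 1) = kernelClass ℓ a m + a.getD m 0 := by
  simp [kernelClass_succ, hm, _root_.twist]

lemma kernelClass_of_length_le {k : ℕ} (hk : a.length ≤ k) :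
    kernelClass ℓ a k =
      ∑ j ∈ Finset.range a.length, ∑ i ∈ Finset.range (j + 1), twist (a.getD j 0) (-(i : ℤ) * ℓ) := by
  unfold kernelClass
  rw [← Finset.sum_subset (Finset.range_subset_range.2 hk) fun h _ hh => by
    simp [Finset.Ico_eq_empty_of_le (not_lt.1 (Finset.mem_range.not.1 hh))]]
  rw [Finset.range_eq_Ico, Finset.sum_Ico_Ico_comm]
  refine Finset.sum_congr rfl fun j _ => ?_
  -- reindex the inner sum by `i = j - h`
  rw [← Finset.range_eq_Ico, ← Finset.sum_range_reflect]
  refine Finset.sum_congr rfl fun i hi => ?_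
  have hij : i ≤ j := Nat.lt_succ_iff.1 (Finset.mem_range.1 hi)
  rw [show j + 1 - 1 - i = j - i by omega, Nat.cast_sub hij]
  ring_nf

variable {ℓ a}

lemma IsJordanType.kernelClass_length {α : ℤ × ℤ} (ha : IsJordanType ℓ α a) :
    kernelClass ℓ a a.length = α :=
  (kernelClass_of_length_le ℓ a le_rfl).trans ha.2.2.2.symm

lemma stdLE_kernelClass_succ (ha : ∀ x ∈ a, PosClass x) (k : ℕ) :
    StdLE (kernelClass ℓ a k) (kernelClass ℓ a (k + 1)) := by
  simpa [StdLE, kernelClass_succ] using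
    PosClass.sum fun j _ => (PosClass.getD ha j).twist (((k : ℤ) - j) * ℓ)

lemma stdLE_kernelClass_of_le (ha : ∀ x ∈ a, PosClass x) {k k' : ℕ} (hk : k ≤ k') :
    StdLE (kernelClass ℓ a k) (kernelClass ℓ a k') := by
  induction k', hk using Nat.le_induction with
  | base => exact StdLE.refl _
  | succ k' _ ih => exact ih.trans (stdLE_kernelClass_succ ha k')

end kernelClass

lemma IsJordanType.getD_ne_zero_of_length_eq_succ {ℓ : ℤ} {α : ℤ × ℤ} {a : List (ℤ × ℤ)}
    (ha : IsJordanType ℓ α a) {m : ℕ} (hm : a.length = m + 1) : a.getD m 0 ≠ 0 := by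
  have hlast : a.getLast? = some (a.getD m 0) := by
    rw [List.getLast?_eq_getElem?, hm, Nat.add_sub_cancel, List.getD_eq_getElem?_getD,
      List.getElem?_eq_getElem (by omega), Option.getD_some]
  exact fun h0 => ha.2.2.1 (hlast.trans (congrArg some h0))

theorem length_le_of_preceq_general (ℓ : ℤ) (α : ℤ × ℤ)
    (a b : List (ℤ × ℤ)) (ha : IsJordanType ℓ α a) (hb : IsJordanType ℓ α b)
    (h : Preceq ℓ b a) :
    b.length ≤ a.length := by
  by_contra! hlt
  obtain ⟨m, hm⟩ : ∃ m, b.length = m + 1 := ⟨b.length - 1, by omega⟩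
  have hna : 1 ≤ a.length := List.length_pos_iff.2 ha.1
  have hlast : StdLE (kernelClass ℓ b m + b.getD m 0) (kernelClass ℓ b m) := by
    rw [← kernelClass_length_of_eq_succ ℓ b hm, ← hm, hb.kernelClass_length,
      ← ha.kernelClass_length]
    exact (h _ hna).trans (stdLE_kernelClass_of_le hb.2.1 (by omega))
  exact hb.getD_ne_zero_of_length_eq_succ hm ((PosClass.getD hb.2.1 m).eq_zero_of_stdLE_add hlast)

/-- If `b ⪯ a` in `J_α` then the length of `b` is at most the length of `a`. -/
theorem length_le_of_preceq (ℓ : ℤ) (α : ℤ × ℤ) (hα : PosClass α)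
    (a b : List (ℤ × ℤ)) (ha : IsJordanType ℓ α a) (hb : IsJordanType ℓ α b)
    (h : Preceq ℓ b a) :
    b.length ≤ a.length :=
  length_le_of_preceq_general ℓ α a b ha hb h
end

section
/- The class of objects strongly generated by L is stable under extensions: if 0 → F' → F → F'' → 0 is a short exact sequence in an abelian category 𝒜 (with Ext groups defined) and both F' and F'' are strongly generated by L, then F is strongly generated by L. -/
open CategoryTheory CategoryTheory.Limits CategoryTheory.Abelian

attribute [local instance] CategoryTheory.Abelian.hasFiniteBiproducts

universe w v u

/-- An object `F` of an abelian category is *strongly generated* by an object `L` if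
`Ext¹(L,F) = 0` and there is an epimorphism `L^{⊕n} ↠ F` for some `n ∈ ℕ`. -/
def StronglyGenerated {C : Type u} [Category.{v} C] [Abelian C] [HasExt.{w} C]
    (L F : C) : Prop :=
  (∀ x : Abelian.Ext L F 1, x = 0) ∧
  ∃ (n : ℕ) (π : (⨁ fun _ : Fin n => L) ⟶ F), Epi π

/-!
Given `0 → F' → F → F'' → 0`, the vanishing of `Ext¹(L, F)` is read off the long exact
`Ext(L, -)`-sequence. Since `Ext¹(L, F') = 0`, every morphism `L ⟶ F''` lifts to `F`, so the
summands of an epimorphism `L^{⊕b} ↠ F''` lift to `F`; together with the composite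
`L^{⊕a} ↠ F' ↪ F` they give a morphism `L^{⊕(a+b)} ⟶ F`, which is an epimorphism by a diagram
chase.
-/

namespace CategoryTheory.Limits.biproduct

variable {C : Type u} [Category.{v} C]

lemma exists_comp_eq_of_forall_ι [HasZeroMorphisms C] {ι : Type*}
    {Z : ι → C} [HasBiproduct Z] {X Y : C} (f : ⨁ Z ⟶ Y) (g : X ⟶ Y)
    (h : ∀ i, ∃ l : Z i ⟶ X, l ≫ g = biproduct.ι Z i ≫ f) :
    ∃ l : ⨁ Z ⟶ X, l ≫ g = f := by
  choose l hl using h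
  exact ⟨biproduct.desc l, by ext i; simp [hl]⟩

variable [Preadditive C] [HasFiniteBiproducts C] {L X : C} {a b : ℕ}

noncomputable def descFinAdd (φ : (⨁ fun _ : Fin a => L) ⟶ X)
    (ψ : (⨁ fun _ : Fin b => L) ⟶ X) : (⨁ fun _ : Fin (a + b) => L) ⟶ X :=
  biproduct.desc (Fin.addCases (motive := fun _ ↦ L ⟶ X)
    (fun j ↦ biproduct.ι (fun _ ↦ L) j ≫ φ) fun j ↦ biproduct.ι (fun _ ↦ L) j ≫ ψ)

lemma descFinAdd_comp_eq_zero_iff (φ : (⨁ fun _ : Fin a => L) ⟶ X)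
    (ψ : (⨁ fun _ : Fin b => L) ⟶ X) {R : C} (u : X ⟶ R) :
    descFinAdd φ ψ ≫ u = 0 ↔ φ ≫ u = 0 ∧ ψ ≫ u = 0 := by
  simp only [descFinAdd, biproduct.hom_ext'_iff, biproduct.ι_desc_assoc, comp_zero,
    Fin.forall_fin_add, Fin.addCases_left, Fin.addCases_right, Category.assoc]

lemma epi_descFinAdd (φ : (⨁ fun _ : Fin a => L) ⟶ X) (ψ : (⨁ fun _ : Fin b => L) ⟶ X)
    (h : ∀ ⦃R : C⦄ (u : X ⟶ R), φ ≫ u = 0 → ψ ≫ u = 0 → u = 0) :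
    Epi (descFinAdd φ ψ) :=
  Preadditive.epi_of_cancel_zero _ fun u hu ↦ ((descFinAdd_comp_eq_zero_iff φ ψ u).1 hu).elim (h u)

end CategoryTheory.Limits.biproduct

namespace CategoryTheory.ShortComplex.ShortExact

variable {C : Type u} [Category.{v} C] [Abelian C] {S : ShortComplex C}

lemma eq_zero_of_comp_eq_zero (hS : S.ShortExact) {P Q R : C} (p : P ⟶ S.X₁) [Epi p]
    (q : Q ⟶ S.X₂) [Epi (q ≫ S.g)] (u : S.X₂ ⟶ R) (hp : p ≫ S.f ≫ u = 0)
    (hq : q ≫ u = 0) : u = 0 := by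
  have : Epi S.g := hS.epi_g
  obtain ⟨d, rfl⟩ := hS.exact.desc' u (by rwa [← cancel_epi p, comp_zero])
  have hd : d = 0 := by rw [← cancel_epi (q ≫ S.g), comp_zero, Category.assoc, hq]
  rw [hd, comp_zero]

variable [HasExt.{w} C]

lemma ext_eq_zero (hS : S.ShortExact) {X : C} {n : ℕ}
    (h₁ : ∀ x : Ext.{w} X S.X₁ n, x = 0) (h₃ : ∀ x : Ext.{w} X S.X₃ n, x = 0)
    (x : Ext.{w} X S.X₂ n) : x = 0 := by
  obtain ⟨x₁, rfl⟩ := Ext.covariant_sequence_exact₂ X hS x (h₃ _)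
  rw [h₁ x₁, Ext.zero_comp]

lemma exists_lift_of_ext_one_eq_zero (hS : S.ShortExact) {X : C}
    (h₁ : ∀ x : Ext.{w} X S.X₁ 1, x = 0) (f : X ⟶ S.X₃) : ∃ l : X ⟶ S.X₂, l ≫ S.g = f := by
  obtain ⟨x, hx⟩ := Ext.covariant_sequence_exact₃ X hS (Ext.mk₀ f) (zero_add 1) (h₁ _)
  obtain ⟨l, rfl⟩ := (Ext.mk₀_bijective X S.X₂).2 x
  exact ⟨l, (Ext.mk₀_bijective X S.X₃).1 (by rwa [← Ext.mk₀_comp_mk₀])⟩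

end CategoryTheory.ShortComplex.ShortExact

/-- Strong generation is stable under extensions: if `0 → F' → F → F'' → 0` is a short exact
sequence and both `F'` and `F''` are strongly generated by `L`, then so is `F`. -/
theorem stronglyGenerated_of_shortExact {C : Type u} [Category.{v} C] [Abelian C]
    [HasExt.{w} C] (L : C) (S : ShortComplex C) (hS : S.ShortExact)
    (h1 : StronglyGenerated.{w} L S.X₁) (h3 : StronglyGenerated.{w} L S.X₃) :
    StronglyGenerated.{w} L S.X₂ := by
  obtain ⟨ext₁, a, π₁, _⟩ := h1
  obtain ⟨ext₃, b, π₃, _⟩ := h3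
  obtain ⟨ψ, hψ⟩ := biproduct.exists_comp_eq_of_forall_ι π₃ S.g
    fun _ ↦ hS.exists_lift_of_ext_one_eq_zero ext₁ _
  refine ⟨hS.ext_eq_zero ext₁ ext₃, a + b, biproduct.descFinAdd (π₁ ≫ S.f) ψ, ?_⟩
  apply biproduct.epi_descFinAdd
  intro R u hfu hψu
  have : Epi (ψ ≫ S.g) := by rwa [hψ]
  exact hS.eq_zero_of_comp_eq_zero π₁ ψ u (by rwa [← Category.assoc]) hψu
end

section
/- The class of objects strongly generated by L is stable under quotients, provided Ext²(L,−) vanishes: let 𝒜 be an abelian category (with Ext groups defined) and L an object such that Ext²(L,K) = 0 for every object K of 𝒜 (as holds when 𝒜 has homological dimension one, e.g. 𝒜 = Coh(X) for a smooth projective curve X). If F is strongly generated by L and F → F'' is an epimorphism, then F'' is strongly generated by L. -/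
open CategoryTheory CategoryTheory.Limits CategoryTheory.Abelian

attribute [local instance] CategoryTheory.Abelian.hasFiniteBiproducts

universe w v u

namespace CategoryTheory

variable {C : Type u} [Category.{v} C] [Abelian C]

lemma ShortComplex.shortExact_kernel_of_epi {F F'' : C} (e : F ⟶ F'') [Epi e] :
    (ShortComplex.mk (kernel.ι e) e (kernel.condition e)).ShortExact where
  exact := ShortComplex.exact_of_f_is_kernel _ (kernelIsKernel e)

lemma Abelian.Ext.eq_zero_of_shortExact [HasExt.{w} C] {S : ShortComplex C}
    (hS : S.ShortExact) (X : C) {n : ℕ} (h₂ : ∀ x : Ext.{w} X S.X₂ n, x = 0)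
    (h₁ : ∀ x : Ext.{w} X S.X₁ (n + 1), x = 0) (x : Ext.{w} X S.X₃ n) : x = 0 := by
  obtain ⟨x₂, rfl⟩ := Ext.covariant_sequence_exact₃ X hS x rfl (h₁ _)
  rw [h₂ x₂, Ext.zero_comp]

end CategoryTheory

/-- Strong generation is stable under quotients, provided `Ext²(L,−)` vanishes: if
`Ext²(L,K) = 0` for every `K`, `F` is strongly generated by `L` and `F ↠ F''` is an
epimorphism, then `F''` is strongly generated by `L`. -/
theorem stronglyGenerated_of_epi {C : Type u} [Category.{v} C] [Abelian C]
    [HasExt.{w} C] (L : C) (hExt2 : ∀ K : C, ∀ x : Abelian.Ext L K 2, x = 0)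
    (F F'' : C) (hF : StronglyGenerated.{w} L F) (e : F ⟶ F'') (he : Epi e) :
    StronglyGenerated.{w} L F'' := by
  obtain ⟨hExt1, n, π, hπ⟩ := hF
  exact ⟨Ext.eq_zero_of_shortExact (ShortComplex.shortExact_kernel_of_epi e) L hExt1 (hExt2 _),
    n, π ≫ e, epi_comp π e⟩
end

section
/- Strong generation is transitive, provided Ext²(L,−) vanishes: let 𝒜 be an abelian category (with Ext groups defined) and L an object such that Ext²(L,K) = 0 for every object K of 𝒜 (as holds when 𝒜 has homological dimension one, e.g. 𝒜 = Coh(X) for a smooth projective curve X). If L' is an object strongly generated by L, then every object F that is strongly generated by L' is also strongly generated by L. -/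
open CategoryTheory CategoryTheory.Limits CategoryTheory.Abelian

attribute [local instance] CategoryTheory.Abelian.hasFiniteBiproducts

universe w v u

/-!
The epimorphism `L^{⊕mn} ≅ (L^{⊕n})^{⊕m} ↠ L'^{⊕m} ↠ F` gives the second half. For the first,
apply `Ext(L, -)` to `0 → K → L'^{⊕m} → F → 0`: the exact segment
`Ext¹(L, L'^{⊕m}) → Ext¹(L, F) → Ext²(L, K)` has vanishing ends, since `Ext¹(L, -)` commutes
with finite biproducts.
-/

section Biproducts

variable {C : Type u} [Category.{v} C] [HasZeroMorphisms C] [HasFiniteBiproducts C]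

noncomputable def biproductFinMulIso (X : C) (m n : ℕ) :
    (⨁ fun _ : Fin (m * n) => X) ≅ ⨁ fun _ : Fin m => ⨁ fun _ : Fin n => X :=
  biproduct.whiskerEquiv (finProdFinEquiv.symm.trans (Equiv.sigmaEquivProd (Fin m) (Fin n)).symm)
      (fun _ => Iso.refl X) ≪≫
    (biproductBiproductIso (fun _ : Fin m => Fin n) (fun _ _ => X)).symm

theorem exists_epi_biproduct_fin_mul {L L' F : C} {n m : ℕ}
    (p : (⨁ fun _ : Fin n => L) ⟶ L') [Epi p] (q : (⨁ fun _ : Fin m => L') ⟶ F) [Epi q] :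
    ∃ π : (⨁ fun _ : Fin (m * n) => L) ⟶ F, Epi π :=
  ⟨(biproductFinMulIso L m n).hom ≫ biproduct.map (fun _ => p) ≫ q, inferInstance⟩

end Biproducts

namespace CategoryTheory.Abelian.Ext

variable {C : Type u} [Category.{v} C] [Abelian C] [HasExt.{w} C]

theorem eq_zero_of_biproduct {J : Type*} [Fintype J] (X : C) {Y : J → C} {n : ℕ}
    (hY : ∀ j (x : Ext X (Y j) n), x = 0) (x : Ext X (⨁ Y) n) : x = 0 :=
  (addEquivBiproduct X (biproduct.isBilimit Y) n).map_eq_zero_iff.mp (funext fun j => hY j _)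

theorem eq_zero_of_epi {X E F : C} (q : E ⟶ F) [Epi q] {n : ℕ}
    (hE : ∀ x : Ext X E n, x = 0) (hK : ∀ x : Ext X (kernel q) (n + 1), x = 0)
    (x : Ext X F n) : x = 0 := by
  have hS : (ShortComplex.mk (kernel.ι q) q (kernel.condition q)).ShortExact :=
    { exact := ShortComplex.exact_kernel q }
  obtain ⟨y, rfl⟩ := covariant_sequence_exact₃ X hS x rfl (hK _)
  rw [hE y, zero_comp]

end CategoryTheory.Abelian.Ext

/-- Strong generation is transitive, provided `Ext²(L,−)` vanishes: if `Ext²(L,K) = 0` for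
every `K`, `L'` is strongly generated by `L`, and `F` is strongly generated by `L'`, then `F`
is strongly generated by `L`. -/
theorem stronglyGenerated_trans {C : Type u} [Category.{v} C] [Abelian C]
    [HasExt.{w} C] (L : C) (hExt2 : ∀ K : C, ∀ x : Abelian.Ext L K 2, x = 0)
    (L' F : C) (hL' : StronglyGenerated.{w} L L') (hF : StronglyGenerated.{w} L' F) :
    StronglyGenerated.{w} L F := by
  obtain ⟨hExt1L', n, p, hp⟩ := hL'
  obtain ⟨-, m, q, hq⟩ := hF
  exact ⟨Ext.eq_zero_of_epi q (Ext.eq_zero_of_biproduct L fun _ => hExt1L') (hExt2 _),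
    m * n, exists_epi_biproduct_fin_mul p q⟩
end
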